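/- arXiv:math/0607608 — 2 statements merged into one kernel-verified Lean document; each statement's English description precedes it below -/
import Mathlib

section
/- The 6×6 symmetric integer matrix M₂ given by the plumbing graph with a linear chain of vertices of weights (-5,-4,-2,-2,-3) (consecutive chain vertices joined by an edge) together with one extra vertex of weight -3 joined to the second chain vertex (the -4 vertex), is negative definite and satisfies |det M₂| = 289 = 17². -/
/-!
The vertices of `P₂` can be sent to vectors `v₀, …, v₅ ∈ ℤ⁶` whose Gram matrix under the standard
(positive) dot product is `-M₂`, i.e. the lattice of `P₂` embeds in the standard diagonal lattice
of the same rank. A Gram matrix of linearly independent vectors is positive definite, and its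
determinant is the square of the determinant of the vectors, here `17`.
-/

/-- The intersection matrix of the plumbing tree `P₂`: a linear chain with weights
`(-5,-4,-2,-2,-3)` (vertices 0–4) and an extra `-3` vertex (vertex 5) joined to the
`-4` vertex. -/
def M₂ : Matrix (Fin 6) (Fin 6) ℤ :=
  !![-5, 1, 0, 0, 0, 0;
      1, -4, 1, 0, 0, 1;
      0, 1, -2, 1, 0, 0;
      0, 0, 1, -2, 1, 0;
      0, 0, 0, 1, -3, 0;
      0, 1, 0, 0, 0, -3]

open Matrix

theorem Matrix.PosDef.mul_conjTranspose_self_of_det_ne_zero {n R : Type*} [Fintype n]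
    [DecidableEq n] [CommRing R] [PartialOrder R] [StarRing R] [StarOrderedRing R] [IsDomain R]
    (E : Matrix n n R) (hE : E.det ≠ 0) : (E * Eᴴ).PosDef :=
  PosDef.mul_conjTranspose_self E fun x y (h : x ᵥ* E = y ᵥ* E) ↦
    sub_eq_zero.mp <| eq_zero_of_vecMul_eq_zero hE <| by rw [sub_vecMul, h, sub_self]

/-- Row `i` is the image of vertex `i` of `P₂` in `ℤ⁶`. -/
def P₂Embedding : Matrix (Fin 6) (Fin 6) ℤ :=
  !![-1, -1, -1,  0,  1,  1;
     -1,  0,  0, -1, -1, -1;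
      1, -1,  0,  0,  0,  0;
      0,  1, -1,  0,  0,  0;
      0,  0,  1, -1,  0,  1;
      0,  0,  0,  1, -1,  1]

theorem neg_M₂_eq_mul_conjTranspose : -M₂ = P₂Embedding * P₂Embeddingᴴ := by
  decide

theorem det_P₂Embedding : P₂Embedding.det = 17 := by
  simp [P₂Embedding, det_succ_row_zero, Fin.sum_univ_succ, Fin.succAbove]

/-- `M₂` is negative definite and `|det M₂| = 289 = 17²`. -/
theorem M₂_negDef_det : (-M₂).PosDef ∧ M₂.det.natAbs = 289 ∧ 289 = 17 ^ 2 := by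
  have hdet : M₂.det = P₂Embedding.det ^ 2 := by
    rw [← neg_neg M₂, det_neg, neg_M₂_eq_mul_conjTranspose, det_mul, det_conjTranspose,
      star_trivial, Fintype.card_fin]
    ring
  refine ⟨?_, by rw [hdet, det_P₂Embedding]; rfl, by norm_num⟩
  rw [neg_M₂_eq_mul_conjTranspose]
  exact .mul_conjTranspose_self_of_det_ne_zero _ (by simp [det_P₂Embedding])
end

section
/- The 8×8 symmetric integer matrix M₄ given by the plumbing graph with a linear chain of weights (-7,-4,-2,-2,-2,-2,-3) and one extra vertex of weight -3 joined to the second chain vertex (the -4 vertex), is negative definite and satisfies |det M₄| = 625 = 25². -/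
/-!
Symmetric Gaussian elimination on `-M₄`, taking the vertices in the order of the chain and the
extra `-3` vertex last, factors `-M₄ = Lᵀ D L` over `ℚ` with `L` unit upper triangular and
`D` diagonal. The pivots are `Δₖ / Δₖ₋₁`, where `Δ = 1, 7, 27, 47, 67, 87, 107, 234, 625` are
the leading principal minors of `-M₄`; they are all positive, so `-M₄` is positive definite, and
`det (-M₄) = det M₄ = ∏ Δₖ / Δₖ₋₁ = 625`.
-/

/-- The intersection matrix of the plumbing tree `P₄`: a linear chain with weights
`(-7,-4,-2,-2,-2,-2,-3)` (vertices 0–6) and an extra `-3` vertex (vertex 7) joined to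
the `-4` vertex. -/
def M₄ : Matrix (Fin 8) (Fin 8) ℤ :=
  !![-7, 1, 0, 0, 0, 0, 0, 0;
      1, -4, 1, 0, 0, 0, 0, 1;
      0, 1, -2, 1, 0, 0, 0, 0;
      0, 0, 1, -2, 1, 0, 0, 0;
      0, 0, 0, 1, -2, 1, 0, 0;
      0, 0, 0, 0, 1, -2, 1, 0;
      0, 0, 0, 0, 0, 1, -3, 0;
      0, 1, 0, 0, 0, 0, 0, -3]

open Matrix

theorem Matrix.PosDef.of_map_intCast {n K : Type*} [Fintype n] [CommRing K] [LinearOrder K]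
    [IsStrictOrderedRing K] [StarRing K] [TrivialStar K] {A : Matrix n n ℤ}
    (h : (A.map (Int.cast : ℤ → K)).PosDef) : A.PosDef := by
  refine .of_dotProduct_mulVec_pos ?_ fun x hx => ?_
  · ext i j
    simpa using congrFun (congrFun h.1 i) j
  · have hx' : (fun i => (x i : K)) ≠ 0 := fun h0 =>
      hx (funext fun i => by simpa using congrFun h0 i)
    have hpos := h.dotProduct_mulVec_pos hx'
    simp only [dotProduct, mulVec, map_apply, star_trivial] at hpos ⊢
    exact_mod_cast hpos

theorem Matrix.posDef_transpose_mul_diagonal_mul {n K : Type*} [Fintype n] [DecidableEq n]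
    [CommRing K] [PartialOrder K] [StarRing K] [StarOrderedRing K] [TrivialStar K]
    [NoZeroDivisors K] {L : Matrix n n K} (hL : IsUnit L) {d : n → K} (hd : ∀ i, 0 < d i) :
    (Lᵀ * diagonal d * L).PosDef := by
  rw [← conjTranspose_eq_transpose_of_trivial, ← star_eq_conjTranspose,
    IsUnit.posDef_star_left_conjugate_iff hL]
  exact .diagonal hd

theorem Matrix.det_transpose_mul_diagonal_mul {n R : Type*} [Fintype n] [DecidableEq n]
    [CommRing R] (L : Matrix n n R) (d : n → R) :
    (Lᵀ * diagonal d * L).det = L.det ^ 2 * ∏ i, d i := by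
  rw [det_mul, det_mul, det_transpose, det_diagonal]
  ring

def negM₄Pivots : Fin 8 → ℚ :=
  ![7, 27 / 7, 47 / 27, 67 / 47, 87 / 67, 107 / 87, 234 / 107, 625 / 234]

def negM₄Upper : Matrix (Fin 8) (Fin 8) ℚ :=
  !![1, -1 / 7, 0, 0, 0, 0, 0, 0;
     0, 1, -7 / 27, 0, 0, 0, 0, -7 / 27;
     0, 0, 1, -27 / 47, 0, 0, 0, -7 / 47;
     0, 0, 0, 1, -47 / 67, 0, 0, -7 / 67;
     0, 0, 0, 0, 1, -67 / 87, 0, -7 / 87;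
     0, 0, 0, 0, 0, 1, -87 / 107, -7 / 107;
     0, 0, 0, 0, 0, 0, 1, -7 / 234;
     0, 0, 0, 0, 0, 0, 0, 1]

theorem negM₄_map_eq : (-M₄).map (Int.cast : ℤ → ℚ) =
    negM₄Upperᵀ * diagonal negM₄Pivots * negM₄Upper := by
  decide +kernel

theorem negM₄Pivots_pos : ∀ i, 0 < negM₄Pivots i := by
  decide +kernel

theorem prod_negM₄Pivots : ∏ i, negM₄Pivots i = 625 := by
  rw [Fin.prod_univ_eight]
  decide +kernel

theorem det_negM₄Upper : negM₄Upper.det = 1 := by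
  have hupper : negM₄Upper.IsUpperTriangular := by
    intro i j hji
    fin_cases i <;> fin_cases j <;> simp_all [negM₄Upper]
  rw [det_of_isUpperTriangular hupper, Fin.prod_univ_eight]
  simp [negM₄Upper]

theorem posDef_negM₄ : (-M₄).PosDef := by
  have hunit : IsUnit negM₄Upper := by
    rw [isUnit_iff_isUnit_det, det_negM₄Upper]
    exact isUnit_one
  refine .of_map_intCast (K := ℚ) ?_
  rw [negM₄_map_eq]
  exact posDef_transpose_mul_diagonal_mul hunit negM₄Pivots_pos

theorem det_M₄ : M₄.det = 625 := by
  have hdet : ((-M₄).det : ℚ) = 625 := by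
    rw [Int.cast_det, negM₄_map_eq, det_transpose_mul_diagonal_mul, det_negM₄Upper,
      prod_negM₄Pivots]
    norm_num
  rw [det_neg, Fintype.card_fin] at hdet
  norm_num at hdet
  exact_mod_cast hdet

/-- `M₄` is negative definite and `|det M₄| = 625 = 25²`. -/
theorem M₄_negDef_det : (-M₄).PosDef ∧ M₄.det.natAbs = 625 ∧ 625 = 25 ^ 2 :=
  ⟨posDef_negM₄, by rw [det_M₄]; rfl, rfl⟩
end
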